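/- arXiv:1507.02923 — 2 statements merged into one kernel-verified Lean document; each statement's English description precedes it below -/
import Mathlib

section
/- Let f ∈ ℂ[x1,…,xn] be an irreducible homogeneous polynomial of degree d ≥ 2 (so that V(f) is an irreducible affine cone that is not a linear space). Then the dual variety is contained in the ED data singular locus: V(f)* ⊆ DS(f). -/
/-!
Let `y = t • ∇f(x)` with `x` a regular point. By homogeneity, for `s ≠ 0` the point `s • x` is
regular and `∇f(s • x)` is a multiple of `∇f(x)`, so `(s • x + y, s • x)` lies on the ED
correspondence; since `ℂ \ {0}` is Zariski dense in `ℂ`, letting `s → 0` gives `(y, 0) ∈ E_f`.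
The polynomial map `v ↦ (v, 0)` is Zariski continuous, so it carries all of `V(f)*` into `E_f`,
and `0 ∈ Sing(f)` because `d ≥ 2`.
-/

open MvPolynomial Pointwise

/-- Gradient of a multivariate polynomial at a point. -/
noncomputable def grad {n : ℕ} (f : MvPolynomial (Fin n) ℂ) (x : Fin n → ℂ) : Fin n → ℂ :=
  fun i => eval x (pderiv i f)

/-- Zariski closure: zero locus of the ideal of all polynomials vanishing on `S`. -/
def zclosure {σ : Type} (S : Set (σ → ℂ)) : Set (σ → ℂ) :=
  {x | ∀ p : MvPolynomial σ ℂ, (∀ s ∈ S, eval s p = 0) → eval x p = 0}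

/-- Zero locus `V(f)`. -/
def Vp {n : ℕ} (f : MvPolynomial (Fin n) ℂ) : Set (Fin n → ℂ) := {x | eval x f = 0}

/-- Regular locus. -/
def RegL {n : ℕ} (f : MvPolynomial (Fin n) ℂ) : Set (Fin n → ℂ) :=
  {x | eval x f = 0 ∧ grad f x ≠ 0}

/-- Singular locus. -/
def SingL {n : ℕ} (f : MvPolynomial (Fin n) ℂ) : Set (Fin n → ℂ) :=
  {x | eval x f = 0 ∧ grad f x = 0}

/-- ED correspondence: Zariski closure of pairs (u,x), x regular, u - x ∈ ℂ·∇f(x),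
encoded as functions on `Fin n ⊕ Fin n`. -/
def EDcorr {n : ℕ} (f : MvPolynomial (Fin n) ℂ) : Set ((Fin n ⊕ Fin n) → ℂ) :=
  zclosure {w | ∃ u x : Fin n → ℂ, w = Sum.elim u x ∧ x ∈ RegL f ∧ ∃ t : ℂ, u - x = t • grad f x}

/-- ED data singular locus. -/
def DS {n : ℕ} (f : MvPolynomial (Fin n) ℂ) : Set (Fin n → ℂ) :=
  {u | ∃ x, Sum.elim u x ∈ EDcorr f ∧ x ∈ SingL f}

/-- Dual variety. -/
def dualV {n : ℕ} (f : MvPolynomial (Fin n) ℂ) : Set (Fin n → ℂ) :=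
  zclosure {y | ∃ (t : ℂ) (x : Fin n → ℂ), x ∈ RegL f ∧ y = t • grad f x}

/-- Isotropic quadric. -/
def isoQ (n : ℕ) : Set (Fin n → ℂ) := {x | ∑ i, (x i) ^ 2 = 0}

/-- ED data isotropic locus. -/
def DI {n : ℕ} (f : MvPolynomial (Fin n) ℂ) : Set (Fin n → ℂ) :=
  {u | ∃ x, Sum.elim u x ∈ EDcorr f ∧ x ∈ isoQ n ∩ Vp f}

/-- Zariski-closed sets. -/
def IsZClosed {σ : Type} (S : Set (σ → ℂ)) : Prop := zclosure S = S

/-- Irreducibility with respect to Zariski-closed sets. -/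
def IsZIrreducible {σ : Type} (S : Set (σ → ℂ)) : Prop :=
  S.Nonempty ∧ ∀ C₁ C₂ : Set (σ → ℂ), IsZClosed C₁ → IsZClosed C₂ →
    S ⊆ C₁ ∪ C₂ → S ⊆ C₁ ∨ S ⊆ C₂

/-- `C` is an irreducible component of `S`. -/
def IsIrredComponentOf {σ : Type} (C S : Set (σ → ℂ)) : Prop :=
  C ⊆ S ∧ IsZClosed C ∧ IsZIrreducible C ∧
    ∀ C' : Set (σ → ℂ), IsZClosed C' → IsZIrreducible C' → C ⊆ C' → C' ⊆ S → C' = C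

theorem MvPolynomial.IsHomogeneous.eval_smul {R σ : Type*} [CommSemiring R] {φ : MvPolynomial σ R}
    {m : ℕ} (hφ : φ.IsHomogeneous m) (r : R) (x : σ → R) :
    eval (r • x) φ = r ^ m * eval x φ := by
  rw [eval_eq, eval_eq, Finset.mul_sum]
  refine Finset.sum_congr rfl fun e he => ?_
  have hdeg : ∑ i ∈ e.support, e i = m := by
    rw [← Finsupp.degree_apply, Finsupp.degree_eq_weight_one]
    exact hφ (MvPolynomial.mem_support_iff.mp he)
  simp only [Pi.smul_apply, smul_eq_mul, mul_pow, Finset.prod_mul_distrib,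
    Finset.prod_pow_eq_pow_sum, hdeg]
  ring

section Zariski

variable {σ τ : Type}

theorem subset_zclosure (S : Set (σ → ℂ)) : S ⊆ zclosure S :=
  fun _ hs _ hp => hp _ hs

noncomputable def polyMap (P : τ → MvPolynomial σ ℂ) (x : σ → ℂ) : τ → ℂ :=
  fun j => eval x (P j)

theorem eval_polyMap (P : τ → MvPolynomial σ ℂ) (x : σ → ℂ) (p : MvPolynomial τ ℂ) :
    eval (polyMap P x) p = eval x (bind₁ P p) :=
  (aeval_bind₁ x P p).symm

theorem mapsTo_zclosure (P : τ → MvPolynomial σ ℂ) {S : Set (σ → ℂ)} {T : Set (τ → ℂ)}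
    (h : Set.MapsTo (polyMap P) S (zclosure T)) :
    Set.MapsTo (polyMap P) (zclosure S) (zclosure T) := by
  intro x hx p hp
  rw [eval_polyMap]
  exact hx _ fun s hs => (eval_polyMap P s p) ▸ h hs p hp

theorem zclosure_setOf_ne_zero (i : σ) : zclosure {x : σ → ℂ | x i ≠ 0} = Set.univ := by
  refine Set.eq_univ_of_forall fun y p hp => ?_
  have hXp : X i * p = 0 := MvPolynomial.funext fun x => by
    by_cases hx : x i = 0
    · simp [hx]
    · simp [hp x hx]
  rw [(mul_eq_zero.mp hXp).resolve_left (X_ne_zero i), map_zero]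

end Zariski

section Homogeneous

variable {n d : ℕ} {f : MvPolynomial (Fin n) ℂ}

theorem grad_smul (hf : f.IsHomogeneous d) (c : ℂ) (x : Fin n → ℂ) :
    grad f (c • x) = c ^ (d - 1) • grad f x :=
  funext fun _ => hf.pderiv.eval_smul c x

theorem zero_mem_SingL (hd : 2 ≤ d) (hf : f.IsHomogeneous d) : 0 ∈ SingL f := by
  constructor
  · simpa [zero_pow (by omega : d ≠ 0)] using hf.eval_smul (0 : ℂ) 0
  · simpa [zero_pow (by omega : d - 1 ≠ 0)] using grad_smul hf 0 0

theorem smul_mem_RegL (hf : f.IsHomogeneous d) {c : ℂ} (hc : c ≠ 0) {x : Fin n → ℂ}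
    (hx : x ∈ RegL f) : c • x ∈ RegL f := by
  refine ⟨by rw [hf.eval_smul, hx.1, mul_zero], ?_⟩
  rw [grad_smul hf]
  exact smul_ne_zero (pow_ne_zero _ hc) hx.2

theorem sum_elim_smul_grad_zero_mem_EDcorr (hf : f.IsHomogeneous d) {x : Fin n → ℂ}
    (hx : x ∈ RegL f) (t : ℂ) : Sum.elim (t • grad f x) 0 ∈ EDcorr f := by
  let P : Fin n ⊕ Fin n → MvPolynomial Unit ℂ :=
    Sum.elim (fun j => X () * C (x j) + C (t * grad f x j)) fun j => X () * C (x j)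
  have hP : ∀ s : Unit → ℂ, polyMap P s = Sum.elim (s () • x + t • grad f x) (s () • x) := by
    intro s
    funext j
    rcases j with j | j <;> simp [polyMap, P]
  have hline : Set.MapsTo (polyMap P) {s | s () ≠ 0} (EDcorr f) := by
    intro s hs
    rw [hP]
    refine subset_zclosure _ ⟨_, _, rfl, smul_mem_RegL hf hs hx, t / s () ^ (d - 1), ?_⟩
    rw [grad_smul hf, smul_smul, div_mul_cancel₀ _ (pow_ne_zero _ hs)]
    abel
  have h0 : (0 : Unit → ℂ) ∈ zclosure {s | s () ≠ 0} := zclosure_setOf_ne_zero () ▸ trivial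
  rw [show Sum.elim (t • grad f x) 0 = polyMap P 0 by simp [hP]]
  exact mapsTo_zclosure P hline h0

end Homogeneous

theorem dual_subset_DS_general {n d : ℕ} (hd : 2 ≤ d) (f : MvPolynomial (Fin n) ℂ)
    (hf : f.IsHomogeneous d) :
    dualV f ⊆ DS f := by
  let P : Fin n ⊕ Fin n → MvPolynomial (Fin n) ℂ := Sum.elim X fun _ => 0
  have hP : ∀ v, polyMap P v = Sum.elim v 0 := by
    intro v
    funext j
    rcases j with j | j <;> simp [polyMap, P]
  intro u hu
  refine ⟨0, ?_, zero_mem_SingL hd hf⟩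
  rw [← hP]
  refine mapsTo_zclosure P ?_ hu
  rintro _ ⟨t, x, hx, rfl⟩
  rw [hP]
  exact sum_elim_smul_grad_zero_mem_EDcorr hf hx t

/-- Theorem 1, inclusion (1): for an irreducible affine cone `V(f)` (with `f` irreducible
homogeneous of degree `d ≥ 2`, so `V(f)` is not a linear space), the dual variety is contained
in the ED data singular locus. -/
theorem dual_subset_DS {n d : ℕ} (hd : 2 ≤ d) (f : MvPolynomial (Fin n) ℂ)
    (hf : f.IsHomogeneous d) (hirr : Irreducible f) :
    dualV f ⊆ DS f :=
  dual_subset_DS_general hd f hf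
end

section
/- Let f = x1² − 2x1x2 + x2² − 2x1x3 − 2x2x3 + x3² ∈ ℂ[x1,x2,x3], the defining equation of the Cayley–Menger variety (the determinant of the 2×2 Cayley–Menger matrix with entries 2x2, x2+x3−x1, x2+x3−x1, 2x3). Then the dual variety satisfies V(f)* = V(x1x2 + x1x3 + x2x3) = {y ∈ ℂ³ : y1y2 + y1y3 + y2y3 = 0}. -/
open MvPolynomial Pointwise

/-! The gradient of the Cayley–Menger form `f` is the invertible linear map `x ↦ 2Ax`, with
`A = [[1,-1,-1],[-1,1,-1],[-1,-1,1]]`, and the identity `σ₂(∇f(x)) = -4 f(x)` shows that the cone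
over the gradients of `V(f)` lies in the quadric `σ₂ = 0`, where `σ₂ = y₀y₁ + y₀y₂ + y₁y₂`.
Conversely every nonzero `y` with `σ₂(y) = 0` is `∇f(x)/2` for `x = A⁻¹y`, and
`f(x) = -σ₂(y) = 0`, so the cone is exactly the quadric, which is already Zariski closed. -/

lemma dualV_subset_zeroLocus {n : ℕ} {f : MvPolynomial (Fin n) ℂ} {p : MvPolynomial (Fin n) ℂ}
    (hp : ∀ (t : ℂ) (x : Fin n → ℂ), x ∈ RegL f → eval (t • grad f x) p = 0) :
    dualV f ⊆ {y | eval y p = 0} := by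
  rintro y hy
  exact hy p (by rintro _ ⟨t, x, hx, rfl⟩; exact hp t x hx)

lemma smul_grad_mem_dualV {n : ℕ} {f : MvPolynomial (Fin n) ℂ} (t : ℂ) {x : Fin n → ℂ}
    (hx : x ∈ RegL f) : t • grad f x ∈ dualV f :=
  fun _ hp => hp _ ⟨t, x, hx, rfl⟩

lemma pderiv_ofNat {σ R : Type*} [CommSemiring R] (i : σ) (n : ℕ) [n.AtLeastTwo] :
    pderiv i (no_index (OfNat.ofNat n) : MvPolynomial σ R) = 0 :=
  (pderiv i).map_natCast n

noncomputable def cayleyMenger : MvPolynomial (Fin 3) ℂ :=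
  X 0 ^ 2 - 2 * X 0 * X 1 + X 1 ^ 2 - 2 * X 0 * X 2 - 2 * X 1 * X 2 + X 2 ^ 2

lemma eval_cayleyMenger (x : Fin 3 → ℂ) :
    eval x cayleyMenger =
      x 0 ^ 2 - 2 * x 0 * x 1 + x 1 ^ 2 - 2 * x 0 * x 2 - 2 * x 1 * x 2 + x 2 ^ 2 := by
  simp [cayleyMenger]

lemma grad_cayleyMenger (x : Fin 3 → ℂ) :
    grad cayleyMenger x =
      ![2 * x 0 - 2 * x 1 - 2 * x 2, -2 * x 0 + 2 * x 1 - 2 * x 2, -2 * x 0 - 2 * x 1 + 2 * x 2] := by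
  funext i
  fin_cases i <;> simp [grad, cayleyMenger, pderiv_X, pderiv_ofNat] <;> ring

lemma sigma2_grad_cayleyMenger (x : Fin 3 → ℂ) :
    grad cayleyMenger x 0 * grad cayleyMenger x 1 + grad cayleyMenger x 0 * grad cayleyMenger x 2 +
      grad cayleyMenger x 1 * grad cayleyMenger x 2 = -4 * eval x cayleyMenger := by
  simp only [grad_cayleyMenger, eval_cayleyMenger, Matrix.cons_val_zero, Matrix.cons_val_one,
    Matrix.cons_val_two, Matrix.head_cons, Matrix.tail_cons]
  ring

lemma exists_regL_cayleyMenger_grad_eq {y : Fin 3 → ℂ}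
    (hy : y 0 * y 1 + y 0 * y 2 + y 1 * y 2 = 0) (hy0 : y ≠ 0) :
    ∃ x ∈ RegL cayleyMenger, grad cayleyMenger x = (2 : ℂ) • y := by
  set x : Fin 3 → ℂ := ![-(y 1 + y 2) / 2, -(y 0 + y 2) / 2, -(y 0 + y 1) / 2]
  have hgrad : grad cayleyMenger x = (2 : ℂ) • y := by
    funext i
    fin_cases i <;> simp [x, grad_cayleyMenger] <;> ring
  have heval : eval x cayleyMenger = -(y 0 * y 1 + y 0 * y 2 + y 1 * y 2) := by
    simp only [x, eval_cayleyMenger, Matrix.cons_val_zero, Matrix.cons_val_one,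
      Matrix.cons_val_two, Matrix.head_cons, Matrix.tail_cons]
    ring
  refine ⟨x, ⟨?_, ?_⟩, hgrad⟩
  · rw [heval, hy, neg_zero]
  · rw [hgrad]
    exact smul_ne_zero two_ne_zero hy0

/-- The dual variety of the Cayley–Menger variety
`V(x₁² - 2x₁x₂ + x₂² - 2x₁x₃ - 2x₂x₃ + x₃²)` is `V(x₁x₂ + x₁x₃ + x₂x₃)`. -/
theorem dual_cayley_menger :
    dualV (X 0 ^ 2 - 2 * X 0 * X 1 + X 1 ^ 2 - 2 * X 0 * X 2 - 2 * X 1 * X 2 + X 2 ^ 2 :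
        MvPolynomial (Fin 3) ℂ) =
      {y : Fin 3 → ℂ | y 0 * y 1 + y 0 * y 2 + y 1 * y 2 = 0} := by
  change dualV cayleyMenger = _
  apply Set.Subset.antisymm
  · intro y hy
    have := dualV_subset_zeroLocus (p := X 0 * X 1 + X 0 * X 2 + X 1 * X 2) (fun t x hx => ?_) hy
    · simpa using this
    simp only [map_add, map_mul, eval_X, Pi.smul_apply, smul_eq_mul]
    linear_combination t ^ 2 * sigma2_grad_cayleyMenger x - 4 * t ^ 2 * hx.1
  · intro y hy
    by_cases hy0 : y = 0
    · obtain ⟨x, hx, -⟩ :=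
        exists_regL_cayleyMenger_grad_eq (y := ![1, 0, 0]) (by simp) (by simp)
      simpa [hy0] using smul_grad_mem_dualV 0 hx
    · obtain ⟨x, hx, hgrad⟩ := exists_regL_cayleyMenger_grad_eq hy hy0
      simpa [hgrad, smul_smul] using smul_grad_mem_dualV (1 / 2) hx
end
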